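/- arXiv:2105.13780 — 4 statements merged into one kernel-verified Lean document; each statement's English description precedes it below -/
import Mathlib

section
/- Let γ⁰, γ¹, γ² be 2x2 complex matrices satisfying the Clifford relations with η = diag(-1,1,1) and (γ⁰)* = γ⁰, (γᵃ)* = -γᵃ. For Ψ, Φ ∈ ℂ², t > 0, x₁, x₂ ∈ ℝ, define Ψ₋ := Ψ - (x_a/t)γ⁰γᵃΨ and Ψ₊ := Ψ + (x_a/t)γ⁰γᵃΨ (sum over a = 1,2), similarly for Φ. Then 4 Ψ* γ⁰ Φ = (Ψ₋)* γ⁰ Φ₋ + (Ψ₋)* γ⁰ Φ₊ + (Ψ₊)* γ⁰ Φ₋ + ((t² - x₁² - x₂²)/t²) Ψ* γ⁰ Φ. -/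
open Matrix

noncomputable section

abbrev M2 := Matrix (Fin 2) (Fin 2) ℂ

/-- The Minkowski metric η = diag(-1, 1, 1). -/
def η : Fin 3 → Fin 3 → ℝ := fun μ ν =>
  if μ = ν then (if μ = 0 then -1 else 1) else 0

/-! With `A = (x_a/t) γ⁰γᵃ` the paper's spinors are `Ψ∓ = (1 ∓ A) Ψ`. The Clifford relations make
`A` Hermitian, anticommuting with `γ⁰`, and give `A² = |x|²/t²`; expanding, the cross terms
`γ⁰A` cancel between the three sandwiches `(1 ∓ A) γ⁰ (1 ∓ A)`, whose sum is `(3 + |x|²/t²) γ⁰`.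
Adding `((t² - |x|²)/t²) γ⁰` gives `4 γ⁰`. -/

theorem sandwich_sum_of_anticomm {R : Type*} [Ring R] [Algebra ℝ R] {g A : R} {s : ℝ}
    (hanti : A * g = -(g * A)) (hsq : A * A = s • 1) :
    (1 - A) * g * (1 - A) + (1 - A) * g * (1 + A) + (1 + A) * g * (1 - A) = (3 + s) • g := by
  have hAgA : A * g * A = -(s • g) := by
    rw [hanti, neg_mul, mul_assoc, hsq, mul_smul_comm, mul_one]
  simp only [mul_add, add_mul, sub_mul, mul_sub, one_mul, mul_one, hAgA]
  simp only [hanti]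
  module

theorem star_mulVec_dotProduct_mulVec_mulVec {m n α : Type*} [Fintype m] [Fintype n]
    [CommSemiring α] [StarRing α] (N : Matrix m n α) (M : Matrix m m α) (K : Matrix m n α)
    (v w : n → α) :
    star (N *ᵥ v) ⬝ᵥ (M *ᵥ (K *ᵥ w)) = star v ⬝ᵥ ((Nᴴ * M * K) *ᵥ w) := by
  simp only [star_mulVec, dotProduct_mulVec, vecMul_vecMul, mulVec_mulVec, Matrix.mul_assoc]

section Alpha

variable {R ι : Type*} [Ring R] [Algebra ℝ R] [Fintype ι] {g₀ : R} {g : ι → R}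

/-- `c · α` for the Dirac matrices `αᵃ = γ⁰γᵃ`. -/
def alphaDot (g₀ : R) (g : ι → R) (c : ι → ℝ) : R :=
  g₀ * ∑ a, c a • g a

theorem sum_smul_mul_anticomm (hanti : ∀ a, g a * g₀ = -(g₀ * g a)) (c : ι → ℝ) :
    (∑ a, c a • g a) * g₀ = -(g₀ * ∑ a, c a • g a) := by
  simp only [Finset.sum_mul, Finset.mul_sum, ← Finset.sum_neg_distrib, smul_mul_assoc,
    mul_smul_comm, hanti, smul_neg]

theorem sum_smul_mul_self_of_clifford [DecidableEq ι]
    (hg : ∀ a b, g a * g b + g b * g a = if a = b then -2 else 0) (c : ι → ℝ) :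
    (∑ a, c a • g a) * (∑ a, c a • g a) = -(∑ a, c a ^ 2) • 1 := by
  have hdouble : (2 : ℝ) • ((∑ a, c a • g a) * (∑ a, c a • g a))
      = ∑ a, ∑ b, (c a * c b) • (g a * g b + g b * g a) := by
    simp only [Finset.sum_mul, Finset.mul_sum, smul_mul_smul_comm, two_smul, smul_add,
      Finset.sum_add_distrib]
    have hswap : ∑ a, ∑ b, (c a * c b) • (g b * g a) = ∑ a, ∑ b, (c a * c b) • (g a * g b) := by
      rw [Finset.sum_comm]
      simp only [mul_comm (c _) (c _)]
    rw [hswap, Finset.sum_comm]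
  apply smul_right_injective R (two_ne_zero (α := ℝ))
  simp only [hdouble, hg, smul_ite, smul_zero, Finset.sum_ite_eq, Finset.mem_univ, if_true]
  simp only [smul_neg, neg_smul, Finset.sum_smul, Finset.smul_sum, smul_smul, sq]
  rw [Finset.sum_neg_distrib, neg_inj]
  refine Finset.sum_congr rfl fun a _ => ?_
  rw [mul_comm (2 : ℝ), mul_smul, mul_smul, ofNat_smul_eq_nsmul (R := ℝ), nsmul_one,
    Nat.cast_ofNat, smul_smul]

theorem alphaDot_mul_anticomm (hanti : ∀ a, g a * g₀ = -(g₀ * g a)) (c : ι → ℝ) :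
    alphaDot g₀ g c * g₀ = -(g₀ * alphaDot g₀ g c) := by
  rw [alphaDot, mul_assoc, sum_smul_mul_anticomm hanti, mul_neg, ← mul_assoc]

theorem alphaDot_mul_self [DecidableEq ι] (h₀ : g₀ * g₀ = 1)
    (hanti : ∀ a, g a * g₀ = -(g₀ * g a))
    (hg : ∀ a b, g a * g b + g b * g a = if a = b then -2 else 0) (c : ι → ℝ) :
    alphaDot g₀ g c * alphaDot g₀ g c = (∑ a, c a ^ 2) • 1 := by
  rw [alphaDot, mul_assoc, ← mul_assoc _ g₀, sum_smul_mul_anticomm hanti, neg_mul,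
    mul_assoc, sum_smul_mul_self_of_clifford hg, mul_neg, ← mul_assoc, h₀, one_mul, neg_smul,
    neg_neg]

theorem star_alphaDot [StarRing R] [StarModule ℝ R] (h₀ : star g₀ = g₀)
    (hg : ∀ a, star (g a) = -g a) (hanti : ∀ a, g a * g₀ = -(g₀ * g a)) (c : ι → ℝ) :
    star (alphaDot g₀ g c) = alphaDot g₀ g c := by
  rw [alphaDot, star_mul, h₀, star_sum]
  simp only [star_smul, star_trivial, hg, smul_neg, Finset.sum_neg_distrib, neg_mul]
  rw [sum_smul_mul_anticomm hanti, neg_neg]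

end Alpha

theorem alphaDot_mulVec {n ι : Type*} [Fintype n] [DecidableEq n] [Fintype ι]
    (g₀ : Matrix n n ℂ) (g : ι → Matrix n n ℂ) (c : ι → ℝ) (v : n → ℂ) :
    alphaDot g₀ g c *ᵥ v = ∑ a, (c a : ℂ) • ((g₀ * g a) *ᵥ v) := by
  simp only [alphaDot, Finset.mul_sum, sum_mulVec, mul_smul_comm, smul_mulVec, Complex.coe_smul]

section Clifford

variable {γ : Fin 3 → M2}

theorem gamma_zero_mul_self
    (hClif : ∀ μ ν : Fin 3, γ μ * γ ν + γ ν * γ μ = (-2 * (η μ ν : ℂ)) • (1 : M2)) :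
    γ 0 * γ 0 = 1 := by
  have h := hClif 0 0
  simp only [η, if_true, Complex.ofReal_neg, Complex.ofReal_one, mul_neg, mul_one, neg_neg] at h
  rw [← two_smul ℂ] at h
  exact smul_right_injective M2 two_ne_zero h

theorem gamma_succ_mul_gamma_zero
    (hClif : ∀ μ ν : Fin 3, γ μ * γ ν + γ ν * γ μ = (-2 * (η μ ν : ℂ)) • (1 : M2)) (a : Fin 2) :
    γ a.succ * γ 0 = -(γ 0 * γ a.succ) := by
  have h := hClif a.succ 0
  simp only [η, Fin.succ_ne_zero, if_false, Complex.ofReal_zero, mul_zero, zero_smul] at h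
  exact eq_neg_of_add_eq_zero_left h

theorem gamma_succ_anticomm
    (hClif : ∀ μ ν : Fin 3, γ μ * γ ν + γ ν * γ μ = (-2 * (η μ ν : ℂ)) • (1 : M2)) (a b : Fin 2) :
    γ a.succ * γ b.succ + γ b.succ * γ a.succ = if a = b then -2 else 0 := by
  rw [hClif, η]
  by_cases hab : a = b
  · simp [hab, Fin.succ_ne_zero, two_smul, one_add_one_eq_two]
  · simp [hab]

end Clifford

/-- Hidden Klein-Gordon structure of the Lorentz scalar Ψ*γ⁰Φ. -/
theorem hidden_KG_decomposition
    (γ : Fin 3 → M2)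
    (hClif : ∀ μ ν : Fin 3, γ μ * γ ν + γ ν * γ μ = (-2 * (η μ ν : ℂ)) • (1 : M2))
    (h0 : (γ 0)ᴴ = γ 0) (ha : ∀ a : Fin 2, (γ a.succ)ᴴ = -(γ a.succ))
    (Ψ Φ : Fin 2 → ℂ) (t : ℝ) (ht : 0 < t) (x : Fin 2 → ℝ) :
    let minus : (Fin 2 → ℂ) → (Fin 2 → ℂ) := fun Θ =>
      Θ - ∑ a : Fin 2, ((x a / t : ℝ) : ℂ) • (γ 0 * γ a.succ).mulVec Θ
    let plus : (Fin 2 → ℂ) → (Fin 2 → ℂ) := fun Θ =>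
      Θ + ∑ a : Fin 2, ((x a / t : ℝ) : ℂ) • (γ 0 * γ a.succ).mulVec Θ
    4 * (star Ψ ⬝ᵥ (γ 0).mulVec Φ)
      = star (minus Ψ) ⬝ᵥ (γ 0).mulVec (minus Φ)
        + star (minus Ψ) ⬝ᵥ (γ 0).mulVec (plus Φ)
        + star (plus Ψ) ⬝ᵥ (γ 0).mulVec (minus Φ)
        + (((t ^ 2 - x 0 ^ 2 - x 1 ^ 2) / t ^ 2 : ℝ) : ℂ) *
            (star Ψ ⬝ᵥ (γ 0).mulVec Φ) := by
  intro minus plus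
  have hanti := gamma_succ_mul_gamma_zero hClif
  have hsum := sandwich_sum_of_anticomm (alphaDot_mul_anticomm hanti _)
    (alphaDot_mul_self (gamma_zero_mul_self hClif) hanti (gamma_succ_anticomm hClif)
      (fun a => x a / t))
  set A := alphaDot (γ 0) (fun a => γ a.succ) (fun a => x a / t) with hA
  have hminus (Θ : Fin 2 → ℂ) : minus Θ = (1 - A) *ᵥ Θ := by
    rw [sub_mulVec, one_mulVec, hA, alphaDot_mulVec]
  have hplus (Θ : Fin 2 → ℂ) : plus Θ = (1 + A) *ᵥ Θ := by
    rw [add_mulVec, one_mulVec, hA, alphaDot_mulVec]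
  have hAH : Aᴴ = A := star_alphaDot h0 ha hanti _
  have hscalar : (∑ a, (x a / t) ^ 2) + (t ^ 2 - x 0 ^ 2 - x 1 ^ 2) / t ^ 2 = 1 := by
    rw [Fin.sum_univ_two]
    field_simp [ht.ne']
    ring
  simp only [hminus, hplus, star_mulVec_dotProduct_mulVec_mulVec, conjTranspose_sub,
    conjTranspose_add, conjTranspose_one, hAH, ← dotProduct_add, ← add_mulVec]
  rw [hsum, smul_mulVec, dotProduct_smul, Complex.real_smul, ← add_mul, ← Complex.ofReal_add,
    add_assoc, hscalar]
  norm_num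
end
end

section
/- Let ψ : ℝ^{1+2} → ℂ² be twice continuously differentiable and v : ℝ^{1+2} → ℝ satisfy, with Dirac matrices obeying the Clifford relations (η = diag(-1,1,1)): iγ^μ∂_μψ = vψ and -□v + v = ψ*γ⁰ψ. Then ψ̃ := ψ - iγ^ν∂_ν(vψ) satisfies iγ^μ∂_μψ̃ = (ψ*γ⁰ψ)ψ - iγ^ν v ∂_ν(vψ) - 2 η^{αβ}(∂_α v)(∂_β ψ). -/
open Matrix

noncomputable section

/-- Partial derivative in the i-th coordinate direction on ℝ^{1+2}. -/
def pd {E : Type*} [NormedAddCommGroup E] [NormedSpace ℝ E]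
    (i : Fin 3) (f : (Fin 3 → ℝ) → E) (p : Fin 3 → ℝ) : E :=
  fderiv ℝ f p (Pi.single i 1)

/-- The wave operator □ = -∂_t² + ∂₁² + ∂₂². -/
def Box {E : Type*} [NormedAddCommGroup E] [NormedSpace ℝ E]
    (f : (Fin 3 → ℝ) → E) (p : Fin 3 → ℝ) : E :=
  -pd 0 (fun q => pd 0 f q) p + pd 1 (fun q => pd 1 f q) p + pd 2 (fun q => pd 2 f q) p

/-! Squaring the Dirac operator gives the wave operator: the Clifford relations replace the
symmetric part of `γ^μ γ^ν` by `-η^{μν}`, and mixed partials commute. Hence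
`D ψ̃ = vψ - □(vψ)`; expanding `□(vψ)` by the Leibniz rule, using `□ψ = D(Dψ) = D(vψ)` and
replacing `□v` by `v - ψ*γ⁰ψ` gives the claim. -/

section PartialDerivatives

variable {E F : Type*} [NormedAddCommGroup E] [NormedSpace ℝ E]
  [NormedAddCommGroup F] [NormedSpace ℝ F] {f g : (Fin 3 → ℝ) → E} {p : Fin 3 → ℝ}

theorem pd_add (i : Fin 3) (hf : DifferentiableAt ℝ f p) (hg : DifferentiableAt ℝ g p) :
    pd i (fun q => f q + g q) p = pd i f p + pd i g p := by
  simp [pd, fderiv_fun_add hf hg]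

theorem pd_sub (i : Fin 3) (hf : DifferentiableAt ℝ f p) (hg : DifferentiableAt ℝ g p) :
    pd i (fun q => f q - g q) p = pd i f p - pd i g p := by
  simp [pd, fderiv_fun_sub hf hg]

theorem pd_sum {ι : Type*} (i : Fin 3) (s : Finset ι) {f : ι → (Fin 3 → ℝ) → E}
    (hf : ∀ k ∈ s, DifferentiableAt ℝ (f k) p) :
    pd i (fun q => ∑ k ∈ s, f k q) p = ∑ k ∈ s, pd i (f k) p := by
  simp [pd, fderiv_fun_sum hf]

theorem pd_const_smul {R : Type*} [Monoid R] [DistribMulAction R E] [SMulCommClass ℝ R E]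
    [ContinuousConstSMul R E] (i : Fin 3) (c : R) (hf : DifferentiableAt ℝ f p) :
    pd i (fun q => c • f q) p = c • pd i f p := by
  simp [pd, fderiv_fun_const_smul hf]

theorem pd_smul {v : (Fin 3 → ℝ) → ℝ} (i : Fin 3) (hv : DifferentiableAt ℝ v p)
    (hf : DifferentiableAt ℝ f p) :
    pd i (fun q => v q • f q) p = pd i v p • f p + v p • pd i f p := by
  simp [pd, fderiv_fun_smul hv hf, add_comm]

theorem pd_clm_apply (i : Fin 3) (L : E →L[ℝ] F) (hf : DifferentiableAt ℝ f p) :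
    pd i (fun q => L (f q)) p = L (pd i f p) := by
  unfold pd
  rw [show (fun q => L (f q)) = L ∘ f from rfl, (L.hasFDerivAt.comp p hf.hasFDerivAt).fderiv]
  rfl

section MulVec

variable {m n : Type*} [Fintype m] [Fintype n] (A : Matrix m n ℂ) {f : (Fin 3 → ℝ) → n → ℂ}

def Matrix.mulVecCLM : (n → ℂ) →L[ℝ] m → ℂ :=
  LinearMap.toContinuousLinearMap ((mulVecLin A).restrictScalars ℝ)

theorem DifferentiableAt.const_mulVec (hf : DifferentiableAt ℝ f p) :
    DifferentiableAt ℝ (fun q => A *ᵥ f q) p :=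
  A.mulVecCLM.differentiableAt.comp p hf

theorem pd_mulVec (i : Fin 3) (hf : DifferentiableAt ℝ f p) :
    pd i (fun q => A *ᵥ f q) p = A *ᵥ pd i f p :=
  pd_clm_apply i A.mulVecCLM hf

end MulVec

theorem ContDiff.differentiable_pd (hf : ContDiff ℝ 2 f) (i : Fin 3) :
    Differentiable ℝ (pd i f) :=
  ((hf.fderiv_right (m := 1) (by norm_num)).clm_apply contDiff_const).differentiable
    one_ne_zero

theorem pd_comm (hf : ContDiff ℝ 2 f) (i j : Fin 3) (p : Fin 3 → ℝ) :
    pd i (pd j f) p = pd j (pd i f) p := by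
  have hdf : DifferentiableAt ℝ (fderiv ℝ f) p :=
    (hf.fderiv_right (m := 1) (by norm_num)).differentiable one_ne_zero p
  have pd_pd_eq : ∀ u w : Fin 3 → ℝ,
      fderiv ℝ (fun q => fderiv ℝ f q w) p u = fderiv ℝ (fderiv ℝ f) p u w := by
    intro u w
    simp [fderiv_clm_apply hdf (differentiableAt_const w)]
  have hsymm : IsSymmSndFDerivAt ℝ f p :=
    hf.contDiffAt.isSymmSndFDerivAt (by simp [minSmoothness_of_isRCLikeNormedField])
  unfold pd
  rw [pd_pd_eq, pd_pd_eq, hsymm.eq]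

theorem pd_pd_smul {v : (Fin 3 → ℝ) → ℝ} (hv : ContDiff ℝ 2 v) (hf : ContDiff ℝ 2 f)
    (μ ν : Fin 3) (p : Fin 3 → ℝ) :
    pd μ (pd ν (fun q => v q • f q)) p
      = pd μ (pd ν v) p • f p + pd ν v p • pd μ f p
        + (pd μ v p • pd ν f p + v p • pd μ (pd ν f) p) := by
  have hv' := hv.differentiable two_ne_zero
  have hf' := hf.differentiable two_ne_zero
  have product_rule : pd ν (fun q => v q • f q) = fun q => pd ν v q • f q + v q • pd ν f q :=
    funext fun q => pd_smul ν (hv' q) (hf' q)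
  rw [product_rule, pd_add μ ((hv.differentiable_pd ν p).fun_smul (hf' p))
      ((hv' p).fun_smul (hf.differentiable_pd ν p)),
    pd_smul μ (hv.differentiable_pd ν p) (hf' p), pd_smul μ (hv' p) (hf.differentiable_pd ν p)]

end PartialDerivatives

theorem box_eq_sum_eta {E : Type*} [NormedAddCommGroup E] [NormedSpace ℝ E]
    (f : (Fin 3 → ℝ) → E) (p : Fin 3 → ℝ) :
    Box f p = ∑ μ, ∑ ν, η μ ν • pd μ (pd ν f) p := by
  simp [Box, η, Fin.sum_univ_three]

theorem sum_mulVec_clifford_of_symm {ι m : Type*} [Fintype ι] [Fintype m] [DecidableEq m]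
    (γ : ι → Matrix m m ℂ) (g : ι → ι → ℝ)
    (hClif : ∀ μ ν, γ μ * γ ν + γ ν * γ μ = (-2 * (g μ ν : ℂ)) • (1 : Matrix m m ℂ))
    (S : ι → ι → m → ℂ) (hS : ∀ μ ν, S μ ν = S ν μ) :
    ∑ μ, ∑ ν, (γ μ * γ ν) *ᵥ S μ ν = -∑ μ, ∑ ν, g μ ν • S μ ν := by
  refine smul_right_injective _ (two_ne_zero (α := ℂ)) ?_
  calc (2 : ℂ) • ∑ μ, ∑ ν, (γ μ * γ ν) *ᵥ S μ ν
      = ∑ μ, ∑ ν, (γ μ * γ ν) *ᵥ S μ ν + ∑ μ, ∑ ν, (γ ν * γ μ) *ᵥ S μ ν := by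
        rw [two_smul, Finset.sum_comm (f := fun μ ν => (γ ν * γ μ) *ᵥ S μ ν)]
        simp only [hS]
    _ = ∑ μ, ∑ ν, (-2 * (g μ ν : ℂ)) • S μ ν := by
        simp only [← Finset.sum_add_distrib, ← add_mulVec, hClif, smul_mulVec, one_mulVec]
    _ = (2 : ℂ) • -∑ μ, ∑ ν, g μ ν • S μ ν := by
        simp only [Finset.smul_sum, neg_mul, neg_smul, ← Finset.sum_neg_distrib, smul_neg,
          mul_smul, Complex.coe_smul]

def dirac {m : Type*} [Fintype m] (γ : Fin 3 → Matrix m m ℂ) (f : (Fin 3 → ℝ) → m → ℂ)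
    (q : Fin 3 → ℝ) : m → ℂ :=
  Complex.I • ∑ μ, γ μ *ᵥ pd μ f q

section Dirac

variable {m : Type*} [Fintype m] (γ : Fin 3 → Matrix m m ℂ) {f g : (Fin 3 → ℝ) → m → ℂ}
  {p : Fin 3 → ℝ}

theorem dirac_sub (hf : DifferentiableAt ℝ f p) (hg : DifferentiableAt ℝ g p) :
    dirac γ (fun q => f q - g q) p = dirac γ f p - dirac γ g p := by
  simp only [dirac, pd_sub _ hf hg, mulVec_sub, Finset.sum_sub_distrib, smul_sub]

theorem ContDiff.differentiable_sum_mulVec_pd (hf : ContDiff ℝ 2 f) :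
    Differentiable ℝ (fun q => ∑ μ, γ μ *ᵥ pd μ f q) :=
  Differentiable.fun_sum fun μ _ q => (hf.differentiable_pd μ q).const_mulVec (γ μ)

theorem ContDiff.differentiable_dirac (hf : ContDiff ℝ 2 f) : Differentiable ℝ (dirac γ f) :=
  (hf.differentiable_sum_mulVec_pd γ).fun_const_smul _

theorem pd_dirac (hf : ContDiff ℝ 2 f) (μ : Fin 3) :
    pd μ (dirac γ f) p = Complex.I • ∑ ν, γ ν *ᵥ pd μ (pd ν f) p := by
  unfold dirac
  rw [pd_const_smul μ _ (hf.differentiable_sum_mulVec_pd γ p),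
    pd_sum μ _ fun ν _ => (hf.differentiable_pd ν p).const_mulVec (γ ν)]
  simp only [pd_mulVec _ μ (hf.differentiable_pd _ p)]

variable [DecidableEq m]

theorem dirac_dirac
    (hClif : ∀ μ ν : Fin 3, γ μ * γ ν + γ ν * γ μ = (-2 * (η μ ν : ℂ)) • (1 : Matrix m m ℂ))
    (hf : ContDiff ℝ 2 f) (p : Fin 3 → ℝ) :
    dirac γ (dirac γ f) p = Box f p := by
  calc dirac γ (dirac γ f) p
      = Complex.I • ∑ μ, γ μ *ᵥ (Complex.I • ∑ ν, γ ν *ᵥ pd μ (pd ν f) p) := by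
        change Complex.I • ∑ μ, γ μ *ᵥ pd μ (dirac γ f) p = _
        simp only [pd_dirac γ hf]
    _ = -∑ μ, ∑ ν, (γ μ * γ ν) *ᵥ pd μ (pd ν f) p := by
        simp only [mulVec_smul, mulVec_sum, mulVec_mulVec, Finset.smul_sum, smul_smul,
          Complex.I_mul_I, neg_one_smul, Finset.sum_neg_distrib]
    _ = Box f p := by
        rw [sum_mulVec_clifford_of_symm γ η hClif _ fun μ ν => pd_comm hf μ ν p, neg_neg,
          box_eq_sum_eta]

end Dirac

section NullForm

variable {E : Type*} [NormedAddCommGroup E] [NormedSpace ℝ E]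

def nullForm (v : (Fin 3 → ℝ) → ℝ) (f : (Fin 3 → ℝ) → E) (p : Fin 3 → ℝ) : E :=
  ∑ α, ∑ β, η α β • pd α v p • pd β f p

theorem nullForm_eq (v : (Fin 3 → ℝ) → ℝ) (f : (Fin 3 → ℝ) → E) (p : Fin 3 → ℝ) :
    nullForm v f p = -(pd 0 v p • pd 0 f p) + pd 1 v p • pd 1 f p + pd 2 v p • pd 2 f p := by
  simp [nullForm, η, Fin.sum_univ_three]

theorem box_smul {v : (Fin 3 → ℝ) → ℝ} {f : (Fin 3 → ℝ) → E} (hv : ContDiff ℝ 2 v)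
    (hf : ContDiff ℝ 2 f) (p : Fin 3 → ℝ) :
    Box (fun q => v q • f q) p = Box v p • f p + v p • Box f p + (2 : ℝ) • nullForm v f p := by
  simp only [Box, pd_pd_smul hv hf, nullForm_eq]
  module

end NullForm

theorem transformed_Dirac_equation
    (γ : Fin 3 → M2)
    (hClif : ∀ μ ν : Fin 3, γ μ * γ ν + γ ν * γ μ = (-2 * (η μ ν : ℂ)) • (1 : M2))
    (ψ : (Fin 3 → ℝ) → (Fin 2 → ℂ)) (v : (Fin 3 → ℝ) → ℝ)
    (hψ : ContDiff ℝ 2 ψ) (hv : ContDiff ℝ 2 v)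
    -- the Dirac operator iγ^μ ∂_μ
    (D : ((Fin 3 → ℝ) → (Fin 2 → ℂ)) → (Fin 3 → ℝ) → (Fin 2 → ℂ))
    (hD : D = fun Θ q => Complex.I • ∑ μ : Fin 3, (γ μ).mulVec (pd μ Θ q))
    -- the Dirac equation iγ^μ∂_μψ = vψ
    (hDirac : ∀ q, D ψ q = (v q : ℂ) • ψ q)
    -- the Klein-Gordon equation -□v + v = ψ*γ⁰ψ
    (hKG : ∀ q, ((-Box v q + v q : ℝ) : ℂ) = star (ψ q) ⬝ᵥ (γ 0).mulVec (ψ q))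
    (p : Fin 3 → ℝ) :
    -- ψ̃ := ψ - iγ^ν∂_ν(vψ)
    D (fun q => ψ q - D (fun r => (v r : ℂ) • ψ r) q) p
      = (star (ψ p) ⬝ᵥ (γ 0).mulVec (ψ p)) • ψ p
        - Complex.I • ∑ ν : Fin 3, (v p : ℂ) • (γ ν).mulVec (pd ν (fun r => (v r : ℂ) • ψ r) p)
        - (2 : ℂ) • (-((pd 0 v p : ℝ) : ℂ) • pd 0 ψ p + ((pd 1 v p : ℝ) : ℂ) • pd 1 ψ p
            + ((pd 2 v p : ℝ) : ℂ) • pd 2 ψ p) := by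
  obtain rfl : D = dirac γ := hD
  simp only [Complex.coe_smul] at hDirac ⊢
  set φ := fun r => v r • ψ r
  have hφ : ContDiff ℝ 2 φ := hv.smul hψ
  have hBoxψ : Box ψ p = dirac γ φ p := by
    rw [← dirac_dirac γ hClif hψ, show dirac γ ψ = φ from funext hDirac]
  have hKG' : (star (ψ p) ⬝ᵥ γ 0 *ᵥ ψ p) • ψ p = (v p - Box v p) • ψ p := by
    rw [← hKG p, Complex.coe_smul, neg_add_eq_sub]
  have sum_smul_dirac :
      Complex.I • ∑ ν, v p • γ ν *ᵥ pd ν φ p = v p • dirac γ φ p := by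
    rw [dirac, ← Finset.smul_sum, smul_comm]
  calc dirac γ (fun q => ψ q - dirac γ φ q) p
      = dirac γ ψ p - Box φ p := by
        rw [dirac_sub γ (hψ.differentiable two_ne_zero p) (hφ.differentiable_dirac γ p),
          dirac_dirac γ hClif hφ]
    _ = v p • ψ p - (Box v p • ψ p + v p • dirac γ φ p + (2 : ℝ) • nullForm v ψ p) := by
        rw [box_smul hv hψ, hBoxψ, hDirac]
    _ = _ := by
        rw [hKG', sum_smul_dirac]
        simp only [nullForm_eq, neg_smul, Complex.coe_smul]
        module
end
end

section
/- Let γ⁰, γ¹, γ² be 2x2 complex matrices satisfying the Clifford relations with η = diag(-1,1,1) and Hermiticity (γ⁰)* = γ⁰, (γᵃ)* = -γᵃ. For Ψ : ℝ^{1+2} → ℂ² and a point (t,x) with t > 0, define E_D(Ψ)(t,x) := Ψ*Ψ - (x_a/t)Ψ*γ⁰γᵃΨ (sum over a = 1,2) and E₊(Ψ)(t,x) := (Ψ - (x_a/t)γ⁰γᵃΨ)*(Ψ - (x_a/t)γ⁰γᵃΨ). Then pointwise E_D(Ψ) = (1/2)(s²/t²)Ψ*Ψ + (1/2)E₊(Ψ),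 where s² = t² - |x|². In particular, if |x| ≤ t then E_D(Ψ) ≥ 0. -/
open Matrix

noncomputable section

lemma star_dot_self' (v : Fin 2 → ℂ) :
    star v ⬝ᵥ v = ((∑ i, Complex.normSq (v i) : ℝ) : ℂ) := by
  push_cast
  simp [dotProduct, Complex.normSq_eq_conj_mul_self]

/-- Decomposition of the Dirac energy density (identity (2.5)) and its non-negativity. -/
theorem dirac_energy_density_identity
    (γ : Fin 3 → M2)
    (hClif : ∀ μ ν : Fin 3, γ μ * γ ν + γ ν * γ μ = (-2 * (η μ ν : ℂ)) • (1 : M2))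
    (h0 : (γ 0)ᴴ = γ 0) (ha : ∀ a : Fin 2, (γ a.succ)ᴴ = -(γ a.succ))
    (Ψ : Fin 2 → ℂ) (t : ℝ) (ht : 0 < t) (x : Fin 2 → ℝ) :
    let ED : ℂ := star Ψ ⬝ᵥ Ψ
      - ∑ a : Fin 2, ((x a / t : ℝ) : ℂ) * (star Ψ ⬝ᵥ (γ 0 * γ a.succ).mulVec Ψ)
    let Ψm : Fin 2 → ℂ := Ψ - ∑ a : Fin 2, ((x a / t : ℝ) : ℂ) • (γ 0 * γ a.succ).mulVec Ψ
    let Eplus : ℂ := star Ψm ⬝ᵥ Ψm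
    (ED = (1 / 2 : ℂ) * (((t ^ 2 - x 0 ^ 2 - x 1 ^ 2) / t ^ 2 : ℝ) : ℂ) * (star Ψ ⬝ᵥ Ψ)
        + (1 / 2 : ℂ) * Eplus)
      ∧ (Real.sqrt (x 0 ^ 2 + x 1 ^ 2) ≤ t → ED.im = 0 ∧ 0 ≤ ED.re) := by
  intro ED Ψm Eplus
  -- basic Clifford facts
  have hγ0sq : γ 0 * γ 0 = 1 := by
    have h := hClif 0 0
    have h2 : (2:ℂ) • (γ 0 * γ 0) = (2:ℂ) • (1:M2) := by
      rw [two_smul, h]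
      norm_num [η]
    exact smul_right_injective M2 (two_ne_zero) h2
  have hanti : ∀ a : Fin 2, γ a.succ * γ 0 = -(γ 0 * γ a.succ) := by
    intro a
    have h := hClif 0 a.succ
    have hη : η 0 a.succ = 0 := by
      simp [η, (Fin.succ_ne_zero a).symm]
    rw [hη] at h
    simp only [Complex.ofReal_zero, mul_zero, zero_smul] at h
    rw [add_comm] at h
    exact eq_neg_of_add_eq_zero_left h
  have hγaa : ∀ a : Fin 2, γ a.succ * γ a.succ = -1 := by
    intro a
    have h := hClif a.succ a.succ
    have hη : η a.succ a.succ = 1 := by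
      simp [η, Fin.succ_ne_zero a]
    rw [hη] at h
    have h2 : (2:ℂ) • (γ a.succ * γ a.succ) = (2:ℂ) • (-1:M2) := by
      rw [two_smul, h]
      norm_num
    exact smul_right_injective M2 (two_ne_zero) h2
  set B : Fin 2 → M2 := fun a => γ 0 * γ a.succ with hB
  have hBmul : ∀ a b : Fin 2, B a * B b = -(γ a.succ * γ b.succ) := by
    intro a b
    have h1 : B a * B b = γ 0 * ((γ a.succ * γ 0) * γ b.succ) := by
      simp [hB, mul_assoc]
    rw [h1, hanti a, neg_mul, mul_neg, ← mul_assoc, ← mul_assoc, hγ0sq, one_mul]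
  have hBsq : ∀ a : Fin 2, B a * B a = 1 := by
    intro a
    rw [hBmul, hγaa]
    simp
  have hBanti : B 0 * B 1 + B 1 * B 0 = 0 := by
    rw [hBmul, hBmul, ← neg_add]
    have h := hClif (0:Fin 2).succ (1:Fin 2).succ
    have hη : η (0:Fin 2).succ (1:Fin 2).succ = 0 := by
      simp [η]
    rw [hη] at h
    simp only [Complex.ofReal_zero, mul_zero, zero_smul] at h
    rw [h, neg_zero]
  have hBH : ∀ a : Fin 2, (B a)ᴴ = B a := by
    intro a
    rw [hB]
    rw [conjTranspose_mul, h0, ha a, neg_mul, hanti a, neg_neg]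
  set c : Fin 2 → ℂ := fun a => ((x a / t : ℝ) : ℂ) with hc
  set A : M2 := c 0 • B 0 + c 1 • B 1 with hA
  have hAH : Aᴴ = A := by
    rw [hA]
    simp [conjTranspose_add, conjTranspose_smul, hBH, hc, Complex.star_def,
      Complex.conj_ofReal]
  set r : ℂ := c 0 ^ 2 + c 1 ^ 2 with hr
  have hA2 : A * A = r • (1 : M2) := by
    have expand : A * A = (c 0 * c 0) • (B 0 * B 0) + (c 0 * c 1) • (B 0 * B 1 + B 1 * B 0)
        + (c 1 * c 1) • (B 1 * B 1) := by
      rw [hA, add_mul, mul_add, mul_add]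
      simp only [smul_mul_assoc, mul_smul_comm, smul_smul, smul_add]
      rw [mul_comm (c 1) (c 0)]
      abel
    rw [expand, hBsq 0, hBsq 1, hBanti, smul_zero, add_zero, ← add_smul, hr]
    congr 1
    ring
  set S : ℂ := star Ψ ⬝ᵥ Ψ with hS
  set P : ℂ := star Ψ ⬝ᵥ A.mulVec Ψ with hP
  have hAΨ : A.mulVec Ψ = ∑ a : Fin 2, c a • (B a).mulVec Ψ := by
    rw [Fin.sum_univ_two, hA, Matrix.add_mulVec, Matrix.smul_mulVec,
      Matrix.smul_mulVec]
  have hΨm : Ψm = Ψ - A.mulVec Ψ := by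
    rw [hAΨ]
  have hP' : P = ∑ a : Fin 2, c a * (star Ψ ⬝ᵥ (B a).mulVec Ψ) := by
    rw [hP, hAΨ, Fin.sum_univ_two, Fin.sum_univ_two, dotProduct_add, dotProduct_smul,
      dotProduct_smul]
    simp only [smul_eq_mul]
  have hEDeq : ED = S - P := by
    rw [hP']
  have hEplus : Eplus = (1 + r) * S - 2 * P := by
    show star Ψm ⬝ᵥ Ψm = _
    rw [hΨm, star_sub, sub_dotProduct, dotProduct_sub, dotProduct_sub]
    rw [Matrix.star_mulVec, hAH]
    rw [← Matrix.dotProduct_mulVec]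
    have h4 : star Ψ ᵥ* A ⬝ᵥ A.mulVec Ψ = star Ψ ⬝ᵥ (A * A).mulVec Ψ := by
      rw [Matrix.dotProduct_mulVec, Matrix.dotProduct_mulVec, Matrix.vecMul_vecMul]
    rw [h4, hA2, Matrix.smul_mulVec, Matrix.one_mulVec, dotProduct_smul]
    simp only [smul_eq_mul, ← hS, ← hP]
    ring
  have hreal : (t ^ 2 - x 0 ^ 2 - x 1 ^ 2) / t ^ 2 = 1 - ((x 0 / t) ^ 2 + (x 1 / t) ^ 2) := by
    field_simp
    ring
  have hkey : ((((t ^ 2 - x 0 ^ 2 - x 1 ^ 2) / t ^ 2 : ℝ)) : ℂ) = 1 - r := by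
    rw [hreal, hr, hc]
    push_cast
    ring
  have part1 : ED = (1 / 2 : ℂ) * (((t ^ 2 - x 0 ^ 2 - x 1 ^ 2) / t ^ 2 : ℝ) : ℂ) * S
      + (1 / 2 : ℂ) * Eplus := by
    rw [hEDeq, hEplus, hkey]
    ring
  refine ⟨part1, ?_⟩
  intro hx
  have hxt : x 0 ^ 2 + x 1 ^ 2 ≤ t ^ 2 := by
    nlinarith [Real.sq_sqrt (show (0:ℝ) ≤ x 0 ^ 2 + x 1 ^ 2 by positivity),
      Real.sqrt_nonneg (x 0 ^ 2 + x 1 ^ 2)]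
  have hk0 : 0 ≤ (t ^ 2 - x 0 ^ 2 - x 1 ^ 2) / t ^ 2 :=
    div_nonneg (by linarith) (by positivity)
  have hs1 : S = ((∑ i, Complex.normSq (Ψ i) : ℝ) : ℂ) := star_dot_self' Ψ
  have hs2 : Eplus = ((∑ i, Complex.normSq (Ψm i) : ℝ) : ℂ) := star_dot_self' Ψm
  have hEDval : ED = (((1/2) * ((t ^ 2 - x 0 ^ 2 - x 1 ^ 2) / t ^ 2) *
      (∑ i, Complex.normSq (Ψ i)) + (1/2) * (∑ i, Complex.normSq (Ψm i)) : ℝ) : ℂ) := by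
    rw [part1, hs1, hs2]
    push_cast
    ring
  have h1 : (0:ℝ) ≤ ∑ i, Complex.normSq (Ψ i) :=
    Finset.sum_nonneg fun i _ => Complex.normSq_nonneg _
  have h2 : (0:ℝ) ≤ ∑ i, Complex.normSq (Ψm i) :=
    Finset.sum_nonneg fun i _ => Complex.normSq_nonneg _
  constructor
  · rw [hEDval]
    exact Complex.ofReal_im _
  · rw [hEDval, Complex.ofReal_re]
    exact add_nonneg (mul_nonneg (mul_nonneg (by norm_num) hk0) h1)
      (mul_nonneg (by norm_num) h2)
end
end

section
/- Let γ⁰, γ¹, γ² be the standard 2x2 Dirac matrices in 1+2 dimensions (satisfying the Clifford relations with η = diag(-1,1,1) and (γ⁰)* = γ⁰, (γᵃ)* = -γᵃ), and let Ψ, Φ ∈ ℂ². With Ψ₊ := Ψ + (x_a/t)γ⁰γᵃΨ as before (t > 0, x ∈ ℝ²), the analogous decomposition for the vector component fails to gain smallness: (Ψ₊)* Φ₊ = Ψ*Φ + (|x|²/t²)Ψ*Φ + (x_a/t)(Ψ*γ⁰γᵃΦ + Ψ*(γ⁰γᵃ)*Φ) = (1 + |x|²/t²)Ψ*Φ + 2(x_a/t)Ψ*γ⁰γᵃΦ;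 in particular the coefficient of Ψ*Φ is 1 + |x|²/t² rather than s²/t² = 1 - |x|²/t². -/
/-!
Set `Aₐ = γ⁰γᵃ` and `B = ∑ₐ (xₐ/t) Aₐ`, so that `Ψ₊ = (1 + B)Ψ`. The Clifford relations make
the `Aₐ` Hermitian generators of the Euclidean Clifford algebra, `AₐA_b + A_bAₐ = 2δₐ_b`;
hence `B* = B` and `B² = (|x|²/t²)·1`, and `(1 + B)*(1 + B) = 1 + 2B + (|x|²/t²)·1`.
With `γ⁰` inserted one meets `γ⁰(1 + B)` instead, and `B` anticommutes with `γ⁰`, which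
flips the sign of the `|x|²/t²` term.
-/

open Matrix

noncomputable section

theorem sum_smul_mul_self_of_anticommute {R ι : Type*} [Ring R] [Algebra ℝ R] [Fintype ι]
    [DecidableEq ι] (e : ι → R) (he : ∀ a b, e a * e b + e b * e a = if a = b then 2 else 0)
    (c : ι → ℝ) : (∑ a, c a • e a) * (∑ a, c a • e a) = (∑ a, c a ^ 2) • (1 : R) := by
  set S := (∑ a, c a • e a) * (∑ a, c a • e a)
  have hS : S = ∑ a, ∑ b, (c a * c b) • (e a * e b) := by
    simp only [S, Finset.sum_mul_sum, smul_mul_smul_comm]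
  have hS' : S = ∑ a, ∑ b, (c b * c a) • (e b * e a) := hS.trans Finset.sum_comm
  have h2S : S + S = (2 * ∑ a, c a ^ 2) • (1 : R) := by
    calc S + S = ∑ a, ∑ b, (c a * c b) • (e a * e b + e b * e a) := by
          simp only [congrArg₂ (· + ·) hS hS', ← Finset.sum_add_distrib, mul_comm (c _) (c _),
            smul_add]
      _ = ∑ a, (c a * c a) • (2 : R) := by simp [he]
      _ = _ := by
          rw [Finset.mul_sum, Finset.sum_smul]
          refine Finset.sum_congr rfl fun a _ => ?_
          rw [← one_add_one_eq_two, ← two_smul ℝ (1 : R), smul_smul]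
          ring_nf
  calc S = (2⁻¹ : ℝ) • (S + S) := by
        rw [← two_smul ℝ S, smul_smul, inv_mul_cancel₀ two_ne_zero, one_smul]
    _ = _ := by rw [h2S, smul_smul, ← mul_assoc, inv_mul_cancel₀ two_ne_zero, one_mul]

theorem Matrix.star_mulVec_dotProduct_mulVec {n : Type*} [Fintype n] (M N : Matrix n n ℂ)
    (v w : n → ℂ) : star (M *ᵥ v) ⬝ᵥ (N *ᵥ w) = star v ⬝ᵥ (Mᴴ * N) *ᵥ w := by
  rw [star_mulVec, ← dotProduct_mulVec, mulVec_mulVec]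

theorem star_add_sum_smul_mulVec_dotProduct {n ι : Type*} [Fintype n] [DecidableEq n]
    [Fintype ι] [DecidableEq ι] (A : ι → Matrix n n ℂ) (hA : ∀ a, (A a)ᴴ = A a)
    (hanti : ∀ a b, A a * A b + A b * A a = if a = b then 2 else 0) (c : ι → ℝ) (v w : n → ℂ) :
    star (v + ∑ a, (c a : ℂ) • (A a *ᵥ v)) ⬝ᵥ (w + ∑ a, (c a : ℂ) • (A a *ᵥ w))
      = ((1 + ∑ a, c a ^ 2 : ℝ) : ℂ) * (star v ⬝ᵥ w)
        + 2 * ∑ a, (c a : ℂ) * (star v ⬝ᵥ A a *ᵥ w) := by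
  set B : Matrix n n ℂ := ∑ a, c a • A a
  have hB : Bᴴ = B := by simp [B, conjTranspose_sum, hA]
  have hBB : B * B = (∑ a, c a ^ 2) • 1 := sum_smul_mul_self_of_anticommute A hanti c
  have hBu : ∀ u, B *ᵥ u = ∑ a, (c a : ℂ) • (A a *ᵥ u) := fun u => by
    simp only [B, sum_mulVec, smul_mulVec, Complex.coe_smul]
  have h1Bu : ∀ u, (1 + B) *ᵥ u = u + ∑ a, (c a : ℂ) • (A a *ᵥ u) := fun u => by
    rw [add_mulVec, one_mulVec, hBu]
  have hsq : (1 + B)ᴴ * (1 + B) = 1 + (2 : ℂ) • B + B * B := by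
    rw [conjTranspose_add, conjTranspose_one, hB, two_smul]; noncomm_ring
  rw [← h1Bu, ← h1Bu, star_mulVec_dotProduct_mulVec, hsq, hBB]
  simp only [add_mulVec, one_mulVec, smul_mulVec, hBu, dotProduct_add, dotProduct_smul,
    dotProduct_sum, smul_eq_mul, Complex.real_smul, Finset.mul_sum]
  push_cast
  ring

theorem η_zero_zero : η 0 0 = -1 := rfl

theorem η_zero_succ (a : Fin 2) : η 0 a.succ = 0 := by
  simp [η, (Fin.succ_ne_zero a).symm]

theorem η_succ_succ (a b : Fin 2) : η a.succ b.succ = if a = b then 1 else 0 := by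
  simp [η, Fin.succ_ne_zero]

section DiracMatrices

variable {γ : Fin 3 → M2}

theorem gamma_zero_mul_succ_mul_gamma_zero_mul_succ
    (hClif : ∀ μ ν : Fin 3, γ μ * γ ν + γ ν * γ μ = (-2 * (η μ ν : ℂ)) • (1 : M2))
    (a b : Fin 2) : γ 0 * γ a.succ * (γ 0 * γ b.succ) = -(γ a.succ * γ b.succ) := by
  calc γ 0 * γ a.succ * (γ 0 * γ b.succ) = γ 0 * (γ a.succ * γ 0) * γ b.succ := by noncomm_ring
    _ = -(γ 0 * γ 0 * (γ a.succ * γ b.succ)) := by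
        rw [gamma_succ_mul_gamma_zero hClif]; noncomm_ring
    _ = _ := by rw [gamma_zero_mul_self hClif, one_mul]

theorem gamma_zero_mul_succ_anticomm
    (hClif : ∀ μ ν : Fin 3, γ μ * γ ν + γ ν * γ μ = (-2 * (η μ ν : ℂ)) • (1 : M2))
    (a b : Fin 2) :
    γ 0 * γ a.succ * (γ 0 * γ b.succ) + γ 0 * γ b.succ * (γ 0 * γ a.succ)
      = if a = b then 2 else 0 := by
  rw [gamma_zero_mul_succ_mul_gamma_zero_mul_succ hClif,
    gamma_zero_mul_succ_mul_gamma_zero_mul_succ hClif, ← neg_add, hClif, η_succ_succ]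
  split_ifs <;> norm_num [two_smul, one_add_one_eq_two]

theorem conjTranspose_gamma_zero_mul_succ
    (hClif : ∀ μ ν : Fin 3, γ μ * γ ν + γ ν * γ μ = (-2 * (η μ ν : ℂ)) • (1 : M2))
    (h0 : (γ 0)ᴴ = γ 0) (ha : ∀ a : Fin 2, (γ a.succ)ᴴ = -(γ a.succ)) (a : Fin 2) :
    (γ 0 * γ a.succ)ᴴ = γ 0 * γ a.succ := by
  rw [conjTranspose_mul, h0, ha, neg_mul, gamma_succ_mul_gamma_zero hClif, neg_neg]

end DiracMatrices

theorem no_hidden_structure_for_vector_component_general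
    (γ : Fin 3 → M2)
    (hClif : ∀ μ ν : Fin 3, γ μ * γ ν + γ ν * γ μ = (-2 * (η μ ν : ℂ)) • (1 : M2))
    (h0 : (γ 0)ᴴ = γ 0) (ha : ∀ a : Fin 2, (γ a.succ)ᴴ = -(γ a.succ))
    (Ψ Φ : Fin 2 → ℂ) (t : ℝ) (x : Fin 2 → ℝ) :
    star (Ψ + ∑ a : Fin 2, ((x a / t : ℝ) : ℂ) • (γ 0 * γ a.succ).mulVec Ψ) ⬝ᵥ
        (Φ + ∑ a : Fin 2, ((x a / t : ℝ) : ℂ) • (γ 0 * γ a.succ).mulVec Φ)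
      = ((1 + (x 0 ^ 2 + x 1 ^ 2) / t ^ 2 : ℝ) : ℂ) * (star Ψ ⬝ᵥ Φ)
        + 2 * ∑ a : Fin 2, ((x a / t : ℝ) : ℂ) *
            (star Ψ ⬝ᵥ (γ 0 * γ a.succ).mulVec Φ) := by
  have hsq : ∑ a : Fin 2, (x a / t) ^ 2 = (x 0 ^ 2 + x 1 ^ 2) / t ^ 2 := by
    rw [Fin.sum_univ_two, div_pow, div_pow, add_div]
  rw [← hsq]
  exact star_add_sum_smul_mulVec_dotProduct (fun a : Fin 2 => γ 0 * γ a.succ)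
    (conjTranspose_gamma_zero_mul_succ hClif h0 ha) (gamma_zero_mul_succ_anticomm hClif)
    (fun a => x a / t) Ψ Φ

/-- The interaction Ψ*Ψ (without γ⁰) fails to gain smallness: the coefficient of
Ψ*Φ in (Ψ₊)*Φ₊ is 1 + |x|²/t² rather than s²/t² = 1 - |x|²/t². -/
theorem no_hidden_structure_for_vector_component
    (γ : Fin 3 → M2)
    (hClif : ∀ μ ν : Fin 3, γ μ * γ ν + γ ν * γ μ = (-2 * (η μ ν : ℂ)) • (1 : M2))
    (h0 : (γ 0)ᴴ = γ 0) (ha : ∀ a : Fin 2, (γ a.succ)ᴴ = -(γ a.succ))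
    (Ψ Φ : Fin 2 → ℂ) (t : ℝ) (ht : 0 < t) (x : Fin 2 → ℝ) :
    star (Ψ + ∑ a : Fin 2, ((x a / t : ℝ) : ℂ) • (γ 0 * γ a.succ).mulVec Ψ) ⬝ᵥ
        (Φ + ∑ a : Fin 2, ((x a / t : ℝ) : ℂ) • (γ 0 * γ a.succ).mulVec Φ)
      = ((1 + (x 0 ^ 2 + x 1 ^ 2) / t ^ 2 : ℝ) : ℂ) * (star Ψ ⬝ᵥ Φ)
        + 2 * ∑ a : Fin 2, ((x a / t : ℝ) : ℂ) *
            (star Ψ ⬝ᵥ (γ 0 * γ a.succ).mulVec Φ) :=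
  no_hidden_structure_for_vector_component_general γ hClif h0 ha Ψ Φ t x
end
end
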